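/- arXiv:2406.12163 — 6 statements merged into one kernel-verified Lean document; each statement's English description precedes it below -/
import Mathlib

section
/- In every equivalence-equipped argumentation framework, a set S of arguments is a simple equivalence-complete extension if and only if S is a wide equivalence-complete extension. -/
namespace EEAF

variable {A : Type*}

/-- Equivalence closure of a set of arguments. -/
def cl (equiv : A → A → Prop) (S : Set A) : Set A := {u | ∃ v ∈ S, equiv u v}

/-- `S` is simple-conflict-free: no attacks among members of `S`. -/
def SimpleCF (att : A → A → Prop) (S : Set A) : Prop := ∀ u ∈ S, ∀ v ∈ S, ¬ att u v

/-- `S` is wide-conflict-free: its equivalence closure is simple-conflict-free. -/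
def WideCF (att equiv : A → A → Prop) (S : Set A) : Prop := SimpleCF att (cl equiv S)

/-- `S` simple-defends `u`. -/
def SimpleDef (att : A → A → Prop) (S : Set A) (u : A) : Prop :=
  ∀ v, att v u → ∃ w ∈ S, att w v

/-- `S` wide-defends `u`: it simple-defends every member of `cl {u}`. -/
def WideDef (att equiv : A → A → Prop) (S : Set A) (u : A) : Prop :=
  ∀ x ∈ cl equiv ({u} : Set A), SimpleDef att S x

/-- `S` is simple-admissible. -/
def SimpleAdm (att : A → A → Prop) (S : Set A) : Prop :=
  SimpleCF att S ∧ ∀ u ∈ S, SimpleDef att S u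

/-- `S` is wide-admissible. -/
def WideAdm (att equiv : A → A → Prop) (S : Set A) : Prop :=
  WideCF att equiv S ∧ ∀ u ∈ S, WideDef att equiv S u

/-- `S` is closed under equivalence. -/
def ClosedEquiv (equiv : A → A → Prop) (S : Set A) : Prop := S = cl equiv S

/-- Simple equivalence-complete extension. -/
def SimpleEqComplete (att equiv : A → A → Prop) (S : Set A) : Prop :=
  SimpleAdm att S ∧ ClosedEquiv equiv S

/-- Wide equivalence-complete extension. -/
def WideEqComplete (att equiv : A → A → Prop) (S : Set A) : Prop :=
  WideAdm att equiv S ∧ ClosedEquiv equiv S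

/-- A set is a simple equivalence-complete extension iff it is a wide
equivalence-complete extension. -/
theorem simpleEqComplete_iff_wideEqComplete
    (A : Type*) [Fintype A] (att equiv : A → A → Prop) (heq : Equivalence equiv) :
    ∀ S : Set A, SimpleEqComplete att equiv S ↔ WideEqComplete att equiv S := by
  intro S
  constructor
  · rintro ⟨⟨hcf, hdef⟩, hcl⟩
    refine ⟨⟨?_, ?_⟩, hcl⟩
    · rw [WideCF, ← hcl]; exact hcf
    · intro u hu x hx
      obtain ⟨v, hv, hxv⟩ := hx
      have hvu : v = u := hv
      have hxS : x ∈ S := by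
        rw [hcl]; exact ⟨u, hu, hvu ▸ hxv⟩
      exact hdef x hxS
  · rintro ⟨⟨hcf, hdef⟩, hcl⟩
    refine ⟨⟨?_, ?_⟩, hcl⟩
    · intro u hu v hv
      exact hcf u (by rw [hcl] at hu; exact hu) v (by rw [hcl] at hv; exact hv)
    · intro u hu
      exact hdef u hu u ⟨u, rfl, heq.refl u⟩

end EEAF
end

section
/- In every equivalence-equipped argumentation framework, a set S of arguments is a simple equivalence-stable extension if and only if S is a wide equivalence-stable extension. -/
namespace EEAF

variable {A : Type*}

/-- Simple equivalence-stable extension. -/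
def SimpleEqStable (att equiv : A → A → Prop) (S : Set A) : Prop :=
  SimpleEqComplete att equiv S ∧ ∀ u ∉ S, ∃ u' ∈ S, att u' u

/-- Wide equivalence-stable extension. -/
def WideEqStable (att equiv : A → A → Prop) (S : Set A) : Prop :=
  WideEqComplete att equiv S ∧ ∀ u ∉ S, ∃ u' ∈ S, att u' u

/-- A set is a simple equivalence-stable extension iff it is a wide
equivalence-stable extension. -/
theorem simpleEqStable_iff_wideEqStable
    (A : Type*) [Fintype A] (att equiv : A → A → Prop) (heq : Equivalence equiv) :
    ∀ S : Set A, SimpleEqStable att equiv S ↔ WideEqStable att equiv S := by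
  intro S
  constructor
  · rintro ⟨⟨⟨hcf, hdef⟩, hcl⟩, hst⟩
    refine ⟨⟨⟨?_, ?_⟩, hcl⟩, hst⟩
    · unfold WideCF
      rw [← hcl]; exact hcf
    · intro u hu x hx
      have hxS : x ∈ S := by
        rw [hcl]
        obtain ⟨v, hv, hxv⟩ := hx
        exact ⟨u, hu, (Set.mem_singleton_iff.mp hv) ▸ hxv⟩
      exact hdef x hxS
  · rintro ⟨⟨⟨hcf, hdef⟩, hcl⟩, hst⟩
    refine ⟨⟨⟨?_, ?_⟩, hcl⟩, hst⟩
    · unfold WideCF at hcf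
      rw [← hcl] at hcf; exact hcf
    · intro u hu
      exact hdef u hu u ⟨u, rfl, heq.refl u⟩

end EEAF
end

section
/- In every equivalence-equipped argumentation framework, if a set S of arguments is closed under equivalence (S = cl(S)), then S is simple-admissible if and only if S is wide-admissible. -/
namespace EEAF

variable {A : Type*}

/-- If a set is closed under equivalence, then it is simple-admissible iff it is
wide-admissible. -/
theorem closedEquiv_simpleAdm_iff_wideAdm
    (A : Type*) [Fintype A] (att equiv : A → A → Prop) (heq : Equivalence equiv) :
    ∀ S : Set A, ClosedEquiv equiv S → (SimpleAdm att S ↔ WideAdm att equiv S) := by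
  intro S hS
  constructor
  · rintro ⟨hcf, hdef⟩
    refine ⟨?_, ?_⟩
    · unfold WideCF
      rw [← hS]; exact hcf
    · intro u hu x hx
      rcases hx with ⟨v, hv, hxv⟩
      have hvu : v = u := hv
      have hxS : x ∈ S := by
        rw [hS]; exact ⟨u, hu, by rw [hvu] at hxv; exact hxv⟩
      exact hdef x hxS
  · rintro ⟨hcf, hdef⟩
    refine ⟨?_, ?_⟩
    · intro u hu v hv
      exact hcf u (by rw [← hS]; exact hu) v (by rw [← hS]; exact hv)
    · intro u hu
      exact hdef u hu u ⟨u, rfl, heq.refl u⟩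

end EEAF
end

section
/- In every equivalence-equipped argumentation framework, if S is wide-admissible, S ⊆ T, and S wide-defends every argument u ∈ T \ S, then T is wide-admissible. -/
namespace EEAF

variable {A : Type*}

/-- If S is wide-admissible, S ⊆ T, and S wide-defends every element of T \ S,
then T is wide-admissible. -/
theorem wideAdm_extend
    (A : Type*) [Fintype A] (att equiv : A → A → Prop) (heq : Equivalence equiv) :
    ∀ S T : Set A, WideAdm att equiv S → S ⊆ T →
      (∀ u ∈ T \ S, WideDef att equiv S u) → WideAdm att equiv T := by
  intro S T hS hST hdef
  obtain ⟨hScf, hSdef⟩ := hS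
  -- S wide-defends every element of T
  have hall : ∀ u ∈ T, WideDef att equiv S u := by
    intro u hu
    by_cases h : u ∈ S
    · exact hSdef u h
    · exact hdef u ⟨hu, h⟩
  constructor
  · -- wide-conflict-free
    intro u hu v hv hatt
    obtain ⟨tu, htu, hueq⟩ := hu
    obtain ⟨tv, htv, hveq⟩ := hv
    -- S simple-defends v, giving w ∈ S attacking u
    obtain ⟨w, hwS, hwu⟩ := hall tv htv v ⟨tv, rfl, hveq⟩ u hatt
    -- S simple-defends u, giving w' ∈ S attacking w
    obtain ⟨w', hw'S, hw'w⟩ := hall tu htu u ⟨tu, rfl, hueq⟩ w hwu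
    exact hScf w' ⟨w', hw'S, heq.refl w'⟩ w ⟨w, hwS, heq.refl w⟩ hw'w
  · intro u hu x hx v hv
    obtain ⟨w, hwS, hw⟩ := hall u hu x hx v hv
    exact ⟨w, hST hwS, hw⟩

end EEAF
end

section
/- Every equivalence-equipped argumentation framework has at least one wide defence-complete extension, at least one wide defence-preferred extension, and at least one wide defence-grounded extension. -/
namespace EEAF

variable {A : Type*}

/-- `S` is closed under wide defence. -/
def ClosedWideDef (att equiv : A → A → Prop) (S : Set A) : Prop :=
  ∀ u, WideDef att equiv S u → u ∈ S

/-- Wide defence-complete extension. -/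
def WideDefComplete (att equiv : A → A → Prop) (S : Set A) : Prop :=
  WideAdm att equiv S ∧ ClosedWideDef att equiv S

/-! A set is wide defence-complete exactly when it is a wide-conflict-free fixed point of the
monotone operator `F = wideDefenceOp`, `F S = {u | S wide-defends u}`. When `≈` is reflexive, `F`
maps wide-admissible sets to wide-admissible sets; wide-admissibility is preserved by unions of
chains, so by Zorn there is a maximal wide-admissible set, which is then a fixed point of `F` and
hence a preferred extension. The least fixed point of `F` lies below every fixed point, in
particular below that preferred extension, so it is wide-conflict-free: it is the grounded
extension. -/

def wideDefenceOp (att equiv : A → A → Prop) : Set A →o Set A where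
  toFun S := {u | WideDef att equiv S u}
  monotone' _ _ hST _ hu x hx v hv :=
    let ⟨w, hw, hwv⟩ := hu x hx v hv
    ⟨w, hST hw, hwv⟩

variable {att equiv : A → A → Prop} {S T : Set A}

lemma wideDefComplete_iff :
    WideDefComplete att equiv S ↔ WideCF att equiv S ∧ wideDefenceOp att equiv S = S :=
  ⟨fun ⟨⟨hcf, hdef⟩, hclosed⟩ => ⟨hcf, Set.Subset.antisymm hclosed hdef⟩,
    fun ⟨hcf, hfix⟩ => ⟨⟨hcf, hfix.ge⟩, hfix.le⟩⟩

lemma WideCF.anti (hS : WideCF att equiv S) (hTS : T ⊆ S) : WideCF att equiv T :=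
  fun u ⟨a, ha, hua⟩ v ⟨b, hb, hvb⟩ => hS u ⟨a, hTS ha, hua⟩ v ⟨b, hTS hb, hvb⟩

lemma WideCF.wideDefenceOp (hrefl : ∀ a, equiv a a) (hS : WideCF att equiv S) :
    WideCF att equiv (EEAF.wideDefenceOp att equiv S) := by
  rintro x ⟨a, ha, hxa⟩ y ⟨b, hb, hyb⟩ hxy
  -- `S` defends `y` against `x` by some `w`, and then defends `x` against `w` by some `w'`.
  obtain ⟨w, hw, hwx⟩ := hb y ⟨b, rfl, hyb⟩ x hxy
  obtain ⟨w', hw', hw'w⟩ := ha x ⟨a, rfl, hxa⟩ w hwx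
  exact hS w' ⟨w', hw', hrefl w'⟩ w ⟨w, hw, hrefl w⟩ hw'w

lemma WideAdm.wideDefenceOp (hrefl : ∀ a, equiv a a) (hS : WideAdm att equiv S) :
    WideAdm att equiv (EEAF.wideDefenceOp att equiv S) :=
  ⟨hS.1.wideDefenceOp hrefl, fun _ hu => (EEAF.wideDefenceOp att equiv).monotone hS.2 hu⟩

lemma wideAdm_sUnion_of_isChain {c : Set (Set A)} (hc : IsChain (· ⊆ ·) c)
    (hadm : ∀ S ∈ c, WideAdm att equiv S) : WideAdm att equiv (⋃₀ c) := by
  refine ⟨?_, fun u ⟨S, hSc, huS⟩ => (wideDefenceOp att equiv).monotone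
    (Set.subset_sUnion_of_mem hSc) ((hadm S hSc).2 u huS)⟩
  rintro u ⟨a, ⟨S, hSc, haS⟩, hua⟩ v ⟨b, ⟨T, hTc, hbT⟩, hvb⟩
  obtain ⟨U, hUc, hSU, hTU⟩ := hc.directedOn S hSc T hTc
  exact (hadm U hUc).1 u ⟨a, hSU haS, hua⟩ v ⟨b, hTU hbT, hvb⟩

lemma exists_maximal_wideAdm (att equiv : A → A → Prop) :
    ∃ S, Maximal (WideAdm att equiv) S :=
  zorn_subset {S | WideAdm att equiv S} fun c hc hchain =>
    ⟨⋃₀ c, wideAdm_sUnion_of_isChain hchain hc, fun _ => Set.subset_sUnion_of_mem⟩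

lemma maximal_wideDefComplete_of_maximal_wideAdm (hrefl : ∀ a, equiv a a)
    (hS : Maximal (WideAdm att equiv) S) :
    Maximal (WideDefComplete att equiv) S := by
  have hfix : wideDefenceOp att equiv S = S :=
    (hS.eq_of_le (hS.prop.wideDefenceOp hrefl) hS.prop.2).symm
  exact ⟨wideDefComplete_iff.2 ⟨hS.prop.1, hfix⟩, fun T hT hST => hS.2 hT.1 hST⟩

lemma WideDefComplete.minimal_lfp (hS : WideDefComplete att equiv S) :
    Minimal (WideDefComplete att equiv) (wideDefenceOp att equiv).lfp := by
  have hle : ∀ T, WideDefComplete att equiv T → (wideDefenceOp att equiv).lfp ⊆ T :=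
    fun T hT => OrderHom.lfp_le_fixed _ (wideDefComplete_iff.1 hT).2
  refine ⟨wideDefComplete_iff.2 ⟨?_, OrderHom.map_lfp _⟩, fun T hT _ => hle T hT⟩
  exact (wideDefComplete_iff.1 hS).1.anti (hle S hS)

theorem exists_wideDef_complete_preferred_grounded_general
    (A : Type*) (att equiv : A → A → Prop) (heq : Equivalence equiv) :
    (∃ S : Set A, WideDefComplete att equiv S) ∧
    (∃ S : Set A, WideDefComplete att equiv S ∧
      ∀ T, WideDefComplete att equiv T → S ⊆ T → T = S) ∧
    (∃ S : Set A, WideDefComplete att equiv S ∧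
      ∀ T, WideDefComplete att equiv T → T ⊆ S → T = S) := by
  obtain ⟨S, hadm⟩ := exists_maximal_wideAdm att equiv
  have hpref := maximal_wideDefComplete_of_maximal_wideAdm heq.refl hadm
  have hgrounded := hpref.prop.minimal_lfp
  exact ⟨⟨S, hpref.prop⟩, ⟨S, hpref.prop, fun T hT hST => hpref.eq_of_ge hT hST⟩,
    ⟨_, hgrounded.prop, fun T hT hTS => hgrounded.eq_of_le hT hTS⟩⟩

/-- Existence of wide defence-complete, -preferred and -grounded extensions. -/
theorem exists_wideDef_complete_preferred_grounded
    (A : Type*) [Fintype A] (att equiv : A → A → Prop) (heq : Equivalence equiv) :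
    (∃ S : Set A, WideDefComplete att equiv S) ∧
    (∃ S : Set A, WideDefComplete att equiv S ∧
      ∀ T, WideDefComplete att equiv T → S ⊆ T → T = S) ∧
    (∃ S : Set A, WideDefComplete att equiv S ∧
      ∀ T, WideDefComplete att equiv T → T ⊆ S → T = S) :=
  exists_wideDef_complete_preferred_grounded_general A att equiv heq

end EEAF
end

section
/- Every equivalence-equipped argumentation framework has at least one simple defence-complete extension, at least one simple defence-preferred extension, and at least one simple defence-grounded extension. -/
/-!
The defence operator `F S = {u | S simple-defends u}` is monotone, and it maps conflict-free sets
to conflict-free sets: if `u, v ∈ F S` and `u` attacks `v`, then some `w ∈ S` attacks `u` and some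
`w' ∈ S` attacks `w`. Hence `F` preserves admissibility, so a Zorn-maximal admissible set is a
fixed point of `F`, i.e. a complete extension, and it is maximal among complete extensions. The
least fixed point of `F` lies below it, so it is conflict-free as well, and it is the least
complete extension.
-/

namespace EEAF

variable {A : Type*}

/-- `S` is closed under simple defence. -/
def ClosedSimpleDef (att : A → A → Prop) (S : Set A) : Prop :=
  ∀ u, SimpleDef att S u → u ∈ S

/-- Simple defence-complete extension. -/
def SimpleDefComplete (att : A → A → Prop) (S : Set A) : Prop :=
  SimpleAdm att S ∧ ClosedSimpleDef att S

def defenceOp (att : A → A → Prop) : Set A →o Set A where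
  toFun S := {u | SimpleDef att S u}
  monotone' S T hST u hu v hv := by
    obtain ⟨w, hw, hwv⟩ := hu v hv
    exact ⟨w, hST hw, hwv⟩

section

variable {att : A → A → Prop} {S T : Set A}

theorem SimpleCF.mono (hT : SimpleCF att T) (hST : S ⊆ T) : SimpleCF att S :=
  fun u hu v hv => hT u (hST hu) v (hST hv)

theorem simpleDefComplete_iff : SimpleDefComplete att S ↔ SimpleCF att S ∧ defenceOp att S = S :=
  ⟨fun ⟨⟨hcf, hdef⟩, hclosed⟩ => ⟨hcf, subset_antisymm hclosed hdef⟩,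
    fun ⟨hcf, hfix⟩ => ⟨⟨hcf, hfix.symm.subset⟩, hfix.subset⟩⟩

theorem simpleCF_defenceOp (hS : SimpleCF att S) : SimpleCF att (defenceOp att S) := by
  intro u hu v hv huv
  obtain ⟨w, hwS, hwu⟩ := hv u huv
  obtain ⟨w', hw'S, hw'w⟩ := hu w hwu
  exact hS w' hw'S w hwS hw'w

theorem SimpleAdm.subset_defenceOp (hS : SimpleAdm att S) : S ⊆ defenceOp att S := hS.2

theorem simpleAdm_defenceOp (hS : SimpleAdm att S) : SimpleAdm att (defenceOp att S) :=
  ⟨simpleCF_defenceOp hS.1, (defenceOp att).monotone hS.subset_defenceOp⟩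

theorem simpleAdm_sUnion_of_isChain {c : Set (Set A)} (hc : IsChain (· ⊆ ·) c)
    (hadm : ∀ S ∈ c, SimpleAdm att S) : SimpleAdm att (⋃₀ c) := by
  refine ⟨?_, ?_⟩
  · rintro u ⟨S, hSc, huS⟩ v ⟨T, hTc, hvT⟩
    rcases hc.total hSc hTc with hST | hTS
    · exact (hadm T hTc).1 u (hST huS) v hvT
    · exact (hadm S hSc).1 u huS v (hTS hvT)
  · rintro u ⟨S, hSc, huS⟩
    exact (defenceOp att).monotone (Set.subset_sUnion_of_mem hSc) ((hadm S hSc).2 u huS)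

variable (att) in
theorem exists_maximal_simpleAdm : ∃ P : Set A, Maximal (SimpleAdm att) P := by
  refine zorn_subset {S | SimpleAdm att S} fun c hcS hc => ⟨⋃₀ c, ?_, ?_⟩
  · exact simpleAdm_sUnion_of_isChain hc hcS
  · exact fun S hSc => Set.subset_sUnion_of_mem hSc

theorem simpleDefComplete_of_maximal_simpleAdm (hS : Maximal (SimpleAdm att) S) :
    SimpleDefComplete att S := by
  have hfix : defenceOp att S = S :=
    (hS.2 (simpleAdm_defenceOp hS.1) hS.1.subset_defenceOp).antisymm hS.1.subset_defenceOp
  exact simpleDefComplete_iff.2 ⟨hS.1.1, hfix⟩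

theorem lfp_defenceOp_subset (hT : SimpleDefComplete att T) : (defenceOp att).lfp ⊆ T :=
  OrderHom.lfp_le_fixed _ (simpleDefComplete_iff.1 hT).2

theorem simpleDefComplete_lfp_defenceOp (hT : SimpleDefComplete att T) :
    SimpleDefComplete att (defenceOp att).lfp :=
  simpleDefComplete_iff.2
    ⟨(simpleDefComplete_iff.1 hT).1.mono (lfp_defenceOp_subset hT), OrderHom.map_lfp _⟩

end

theorem exists_simpleDef_complete_preferred_grounded_general
    (A : Type*) (att : A → A → Prop) :
    (∃ S : Set A, SimpleDefComplete att S) ∧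
    (∃ S : Set A, SimpleDefComplete att S ∧
      ∀ T, SimpleDefComplete att T → S ⊆ T → T = S) ∧
    (∃ S : Set A, SimpleDefComplete att S ∧
      ∀ T, SimpleDefComplete att T → T ⊆ S → T = S) := by
  obtain ⟨P, hP⟩ := exists_maximal_simpleAdm att
  have hPcomplete := simpleDefComplete_of_maximal_simpleAdm hP
  have hGcomplete := simpleDefComplete_lfp_defenceOp hPcomplete
  refine ⟨⟨P, hPcomplete⟩, ⟨P, hPcomplete, fun T hT hPT => ?_⟩,
    ⟨_, hGcomplete, fun T hT hTG => hTG.antisymm (lfp_defenceOp_subset hT)⟩⟩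
  exact (hP.2 hT.1 hPT).antisymm hPT

/-- Existence of simple defence-complete, -preferred and -grounded extensions. -/
theorem exists_simpleDef_complete_preferred_grounded
    (A : Type*) [Fintype A] (att equiv : A → A → Prop) (heq : Equivalence equiv) :
    (∃ S : Set A, SimpleDefComplete att S) ∧
    (∃ S : Set A, SimpleDefComplete att S ∧
      ∀ T, SimpleDefComplete att T → S ⊆ T → T = S) ∧
    (∃ S : Set A, SimpleDefComplete att S ∧
      ∀ T, SimpleDefComplete att T → T ⊆ S → T = S) :=
  exists_simpleDef_complete_preferred_grounded_general A att

end EEAF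
end
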